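/- Let $n \ge 2$, $d \ge 2$, $l \in \{2,\dots,d\}$, and let $X \in \mathbb{R}^{n \times d}$ be the Case-2 matrix with rows $X_1 = -\tfrac{1}{\sqrt{2}} e_1 + \tfrac{1}{\sqrt{2}} e_l$ and $X_i = \tfrac{1}{\sqrt{2}} e_1 + \tfrac{1}{\sqrt{2}} e_l$ for all $i \in \{2,\dots,n\}$. Let $0 < \varepsilon < 0.04$ and let $\bar{w} \in \mathbb{B}_d$ satisfy $\min_{i \in \{1,\dots,n\}} \langle X_i, \bar{w} \rangle \ge \tfrac{1}{\sqrt{2}} - \varepsilon$. Then $\bar{w}_l > 0.94$, and $\bar{w}_j < 0.94$ for every coordinate $j \ne l$. In particular, $l$ is the unique index $j \in \{2,\dots,d\}$ with $\bar{w}_j > 0.94$. -/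

import Mathlib

/-- Decoding step of the linear-classification lower bound, Case 2: any
`ε`-approximate solution reveals the hidden column index `l` as the unique
coordinate exceeding `0.94`. -/
theorem case2_linear_classification_decoding (n d : ℕ) (hn : 2 ≤ n) (hd : 2 ≤ d)
    (l : Fin d) (hl : (l : ℕ) ≠ 0)
    (X : Fin n → EuclideanSpace ℝ (Fin d))
    (hX1 : ∀ i : Fin n, (i : ℕ) = 0 →
      X i = -((Real.sqrt 2)⁻¹ • EuclideanSpace.single (⟨0, by omega⟩ : Fin d) (1 : ℝ))
        + (Real.sqrt 2)⁻¹ • EuclideanSpace.single l (1 : ℝ))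
    (hXi : ∀ i : Fin n, (i : ℕ) ≠ 0 →
      X i = (Real.sqrt 2)⁻¹ • EuclideanSpace.single (⟨0, by omega⟩ : Fin d) (1 : ℝ)
        + (Real.sqrt 2)⁻¹ • EuclideanSpace.single l (1 : ℝ))
    (ε : ℝ) (hε0 : 0 < ε) (hε1 : ε < 0.04)
    (wbar : EuclideanSpace ℝ (Fin d)) (hwbar : ‖wbar‖ ≤ 1)
    (happrox : ∀ i : Fin n, (inner ℝ (X i) wbar : ℝ) ≥ (Real.sqrt 2)⁻¹ - ε) :
    wbar l > 0.94 ∧ ∀ j : Fin d, j ≠ l → wbar j < 0.94 := by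
  set s := Real.sqrt 2 with hs
  have hs0 : (0:ℝ) < s := Real.sqrt_pos.mpr (by norm_num)
  have hs2 : s * s = 2 := Real.mul_self_sqrt (by norm_num)
  have hs15 : s < 1.5 := by nlinarith
  have hsinv : s * s⁻¹ = 1 := mul_inv_cancel₀ hs0.ne'
  have h1 := happrox ⟨0, by omega⟩
  have h2 := happrox ⟨1, by omega⟩
  rw [hX1 ⟨0, by omega⟩ rfl] at h1
  rw [hXi ⟨1, by omega⟩ (by simp)] at h2
  simp only [inner_add_left, inner_neg_left, real_inner_smul_left,
    EuclideanSpace.inner_single_left, RCLike.inner_apply, map_one, one_mul] at h1 h2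
  -- h1 : -(s⁻¹ * wbar 0) + s⁻¹ * wbar l ≥ s⁻¹ - ε
  -- h2 : s⁻¹ * wbar 0 + s⁻¹ * wbar l ≥ s⁻¹ - ε
  have hwl : wbar l > 0.94 := by nlinarith [mul_pos hs0 hε0]
  refine ⟨hwl, fun j hj => ?_⟩
  have hsum : ∑ i, wbar i ^ 2 ≤ 1 := by
    have h := EuclideanSpace.norm_eq wbar
    simp only [Real.norm_eq_abs, sq_abs] at h
    have h1 : Real.sqrt (∑ i, wbar i ^ 2) ≤ 1 := h ▸ hwbar
    nlinarith [Real.sq_sqrt (Finset.sum_nonneg fun i (_ : i ∈ Finset.univ) => sq_nonneg (wbar i)),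
      Real.sqrt_nonneg (∑ i, wbar i ^ 2)]
  have hpair : wbar j ^ 2 + wbar l ^ 2 ≤ ∑ i, wbar i ^ 2 := by
    have h := Finset.sum_le_sum_of_subset_of_nonneg (s := {j, l})
      (Finset.subset_univ _) (fun i _ _ => sq_nonneg (wbar i))
    rwa [Finset.sum_pair hj] at h
  nlinarith
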